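/- Let A be a (possibly non-unital) associative K-algebra, (V; ρ, μ) a representation of A, ω : A × A → V a 2-cocycle, and B : V → A a twisted Rota-Baxter operator. Then the bilinear operation on V defined by u ∘ v = ρ(B(u))v + μ(B(v))u + ω(B(u), B(v)) is associative, i.e., (V, ∘) is an associative algebra. -/
import Mathlib


/-- The product `u ∘ v = ρ(B(u))v + μ(B(v))u + ω(B(u),B(v))` on `V` induced by a
twisted Rota-Baxter operator `B`. -/
def circB {K : Type*} [Field K] {A V : Type*}
    [AddCommGroup A] [Module K A] [AddCommGroup V] [Module K V]
    (ρ μ : A →ₗ[K] V →ₗ[K] V) (ω : A →ₗ[K] A →ₗ[K] V) (B : V →ₗ[K] A)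
    (u v : V) : V :=
  ρ (B u) v + μ (B v) u + ω (B u) (B v)

/-- if `B : V → A` is a twisted Rota-Baxter operator, then
`u ∘ v = ρ(B(u))v + μ(B(v))u + ω(B(u),B(v))` is an associative product on `V`. -/
theorem stmt17 {K : Type*} [Field K] {A V : Type*}
    [AddCommGroup A] [Module K A] [AddCommGroup V] [Module K V]
    (m : A →ₗ[K] A →ₗ[K] A)
    (assoc : ∀ x y z : A, m (m x y) z = m x (m y z))
    (ρ μ : A →ₗ[K] V →ₗ[K] V)
    (hρ : ∀ (x y : A) (u : V), ρ (m x y) u = ρ x (ρ y u))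
    (hμ : ∀ (x y : A) (u : V), μ (m x y) u = μ y (μ x u))
    (hρμ : ∀ (x y : A) (u : V), ρ x (μ y u) = μ y (ρ x u))
    (ω : A →ₗ[K] A →ₗ[K] V)
    (hω : ∀ x y z : A, ρ x (ω y z) - ω (m x y) z + ω x (m y z) - μ z (ω x y) = 0)
    (B : V →ₗ[K] A)
    (hB : ∀ u v : V, m (B u) (B v) = B (ρ (B u) v + μ (B v) u + ω (B u) (B v))) :
    ∀ u v w : V,
      circB ρ μ ω B (circB ρ μ ω B u v) w = circB ρ μ ω B u (circB ρ μ ω B v w) := by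
  intro u v w
  have h1 := hω (B u) (B v) (B w)
  have hωm : ω (m (B u) (B v)) (B w)
      = ρ (B u) (ω (B v) (B w)) + ω (B u) (m (B v) (B w)) - μ (B w) (ω (B u) (B v)) := by
    have := h1
    abel_nf at this ⊢
    linear_combination (norm := abel) (-1 : ℤ) • this
  simp only [circB]
  rw [show B (ρ (B u) v + μ (B v) u + ω (B u) (B v)) = m (B u) (B v) from (hB u v).symm,
      show B (ρ (B v) w + μ (B w) v + ω (B v) (B w)) = m (B v) (B w) from (hB v w).symm]
  simp only [map_add, hρ, hμ, hρμ, hωm]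
  abel
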